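/- Let f: [0,1] → (0,∞) be defined by f(θ) = E[Y^θ] for a nonnegative random variable Y with E[Y] < ∞ and P(Y > 0) > 0. If E[Y log Y] ≤ 0 (with 0·log 0 := 0), then E[Y] = inf_{0 ≤ θ ≤ 1} E[Y^θ]. -/
import Mathlib


open MeasureTheory

lemma aux_pointwise (y θ : ℝ) (hy : 0 ≤ y) (hθ0 : 0 ≤ θ) (hθ1 : θ ≤ 1) :
    y + (θ - 1) * (y * Real.log y) ≤ (if 0 < y then y ^ θ else 0) := by
  rcases eq_or_lt_of_le hy with h | h
  · simp [← h]
  · rw [if_pos h]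
    have hexp : (θ - 1) * Real.log y + 1 ≤ Real.exp ((θ - 1) * Real.log y) :=
      Real.add_one_le_exp _
    have := mul_le_mul_of_nonneg_left hexp (Real.exp_log h ▸ h.le : (0:ℝ) ≤ y)
    calc y + (θ - 1) * (y * Real.log y) = y * ((θ - 1) * Real.log y + 1) := by ring
    _ ≤ y * Real.exp ((θ - 1) * Real.log y) := this
    _ = Real.exp (Real.log y) * Real.exp ((θ - 1) * Real.log y) := by
        rw [Real.exp_log h]
    _ = Real.exp (Real.log y * θ) := by rw [← Real.exp_add]; ring_nf
    _ = y ^ θ := (Real.rpow_def_of_pos h θ).symm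

lemma aux_integrable {Ω : Type*} [MeasurableSpace Ω] (μ : Measure Ω)
    [IsProbabilityMeasure μ] (Y : Ω → ℝ) (hmeas : Measurable Y)
    (hY0 : ∀ ω, 0 ≤ Y ω) (hint : Integrable Y μ) (θ : ℝ) (hθ0 : 0 ≤ θ) (hθ1 : θ ≤ 1) :
    Integrable (fun ω => (if 0 < Y ω then Y ω ^ θ else 0)) μ := by
  apply Integrable.mono' ((integrable_const 1).add hint)
  · exact ((Measurable.ite (measurableSet_lt measurable_const hmeas)
      (hmeas.pow_const θ) measurable_const)).aestronglyMeasurable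
  · filter_upwards with ω
    simp only [Pi.add_apply]
    by_cases h : 0 < Y ω
    · rw [if_pos h, Real.norm_eq_abs, abs_of_nonneg (Real.rpow_nonneg (hY0 ω) θ)]
      rcases le_or_gt (Y ω) 1 with h1 | h1
      · have := Real.rpow_le_one (hY0 ω) h1 hθ0
        linarith [hY0 ω]
      · have h2 : Y ω ^ θ ≤ Y ω ^ (1:ℝ) :=
          Real.rpow_le_rpow_of_exponent_le h1.le hθ1
        rw [Real.rpow_one] at h2
        linarith
    · simp [if_neg h]
      linarith [hY0 ω]

/-- Let `Y ≥ 0` be integrable with `P(Y > 0) > 0`, let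
`E[Y log Y] ≤ 0` (with the convention `0 log 0 = 0`), and set `f(θ) = E[Y^θ]` on `[0,1]`
with the convention `Y^θ := Y^θ · 1_{Y > 0}` (so `0^0 = 0`). Then
`E[Y] = inf_{0 ≤ θ ≤ 1} E[Y^θ]`. -/
theorem statement2 {Ω : Type*} [MeasurableSpace Ω] (μ : Measure Ω)
    [IsProbabilityMeasure μ] (Y : Ω → ℝ) (hmeas : Measurable Y)
    (hY0 : ∀ ω, 0 ≤ Y ω) (hint : Integrable Y μ)
    (hpos : 0 < μ {ω | 0 < Y ω})
    (hint' : Integrable (fun ω => Y ω * Real.log (Y ω)) μ)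
    (hYlogY : (∫ ω, Y ω * Real.log (Y ω) ∂μ) ≤ 0) :
    (∫ ω, Y ω ∂μ) =
      ⨅ θ : Set.Icc (0 : ℝ) 1,
        ∫ ω, (if 0 < Y ω then Y ω ^ (θ : ℝ) else 0) ∂μ := by
  have key : ∀ θ : Set.Icc (0:ℝ) 1,
      (∫ ω, Y ω ∂μ) ≤ ∫ ω, (if 0 < Y ω then Y ω ^ (θ:ℝ) else 0) ∂μ := by
    intro ⟨θ, hθ0, hθ1⟩
    have hlow : Integrable (fun ω => Y ω + (θ - 1) * (Y ω * Real.log (Y ω))) μ :=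
      hint.add (hint'.const_mul _)
    have hmono : (∫ ω, (Y ω + (θ - 1) * (Y ω * Real.log (Y ω))) ∂μ) ≤
        ∫ ω, (if 0 < Y ω then Y ω ^ θ else 0) ∂μ :=
      integral_mono hlow (aux_integrable μ Y hmeas hY0 hint θ hθ0 hθ1)
        (fun ω => aux_pointwise (Y ω) θ (hY0 ω) hθ0 hθ1)
    rw [integral_add hint (hint'.const_mul _), integral_const_mul] at hmono
    have : 0 ≤ (θ - 1) * ∫ ω, Y ω * Real.log (Y ω) ∂μ := by
      nlinarith
    linarith
  have heq1 : (∫ ω, (if 0 < Y ω then Y ω ^ ((1:ℝ)) else 0) ∂μ) = ∫ ω, Y ω ∂μ := by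
    apply integral_congr_ae
    filter_upwards with ω
    by_cases h : 0 < Y ω
    · simp [if_pos h, Real.rpow_one]
    · simp [if_neg h]
      linarith [hY0 ω]
  refine le_antisymm (le_ciInf key) ?_
  have hbdd : BddBelow (Set.range fun θ : Set.Icc (0:ℝ) 1 =>
      ∫ ω, (if 0 < Y ω then Y ω ^ (θ:ℝ) else 0) ∂μ) :=
    ⟨∫ ω, Y ω ∂μ, by rintro x ⟨θ, rfl⟩; exact key θ⟩
  exact ciInf_le_of_le hbdd ⟨1, by norm_num, le_refl 1⟩ heq1.le
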